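/- Let T = sum_{r=1}^R theta_r (u_{1r} o u_{2r} o u_{3r}) in R^{d_1 x d_2 x d_3} be orthogonally decomposable with theta_1 > theta_r > 0 for all r >= 2, unit vectors u_{mr}, and u_{mr}^T u_{ms} = 0 for r != s in each mode m. If unit vectors s_1 in R^{d_1}, s_2 in R^{d_2}, s_3 in R^{d_3} satisfy sum_{i,j,k} T_{ijk} s_{1,i} s_{2,j} s_{3,k} = theta_1, then there exist signs eps_1, eps_2, eps_3 in {-1, +1} with eps_1 eps_2 eps_3 = 1 such that s_m = eps_m u_{m1} for m = 1, 2, 3. -/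
import Mathlib

open Finset

private lemma recon_aux {d : ℕ} (u s : Fin d → ℝ) (hu : ∑ i, u i ^ 2 = 1)
    (hs : ∑ i, s i ^ 2 = 1) (a : ℝ) (ha : ∑ i, u i * s i = a) (ha2 : a ^ 2 = 1) :
    s = fun i => a * u i := by
  have key : ∑ i, (s i - a * u i) ^ 2 = 0 := by
    have : ∑ i, (s i - a * u i) ^ 2
        = ∑ i, (s i ^ 2 - 2 * a * (u i * s i) + a ^ 2 * u i ^ 2) := by
      apply Finset.sum_congr rfl; intro i _; ring
    rw [this, Finset.sum_add_distrib, Finset.sum_sub_distrib, ← Finset.mul_sum,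
      ← Finset.mul_sum, hs, ha, hu]
    nlinarith
  funext i
  have h := (Finset.sum_eq_zero_iff_of_nonneg (fun i _ => sq_nonneg _)).mp key i (Finset.mem_univ i)
  have := pow_eq_zero_iff (n := 2) (by norm_num) |>.mp h
  linarith [this]

private lemma bessel_aux {d R : ℕ} (u : Fin R → Fin d → ℝ) (s : Fin d → ℝ)
    (hu : ∀ r, ∑ i, u r i ^ 2 = 1) (ho : ∀ r t, r ≠ t → ∑ i, u r i * u t i = 0)
    (hs : ∑ i, s i ^ 2 = 1) :
    ∑ r, (∑ i, u r i * s i) ^ 2 ≤ 1 := by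
  set a : Fin R → ℝ := fun r => ∑ i, u r i * s i with ha
  have h0 : (0:ℝ) ≤ ∑ i, (s i - ∑ r, a r * u r i) ^ 2 :=
    Finset.sum_nonneg fun i _ => sq_nonneg _
  have h2 : ∑ i, s i * ∑ r, a r * u r i = ∑ r, a r ^ 2 := by
    have e : ∀ i, s i * ∑ r, a r * u r i = ∑ r, a r * (u r i * s i) := by
      intro i; rw [Finset.mul_sum]; apply Finset.sum_congr rfl; intro r _; ring
    simp_rw [e]
    rw [Finset.sum_comm]
    apply Finset.sum_congr rfl; intro r _
    rw [← Finset.mul_sum]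
    change a r * a r = a r ^ 2; ring
  have h3 : ∑ i, (∑ r, a r * u r i) ^ 2 = ∑ r, a r ^ 2 := by
    have e : ∀ i, (∑ r, a r * u r i) ^ 2
        = ∑ r, ∑ t, (a r * a t) * (u r i * u t i) := by
      intro i
      rw [sq, Finset.sum_mul_sum]
      apply Finset.sum_congr rfl; intro r _
      apply Finset.sum_congr rfl; intro t _; ring
    simp_rw [e]
    rw [Finset.sum_comm]
    have e2 : ∀ r, ∑ i, ∑ t, (a r * a t) * (u r i * u t i) = a r ^ 2 := by
      intro r
      rw [Finset.sum_comm]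
      have e3 : ∀ t, ∑ i, (a r * a t) * (u r i * u t i)
          = (a r * a t) * ∑ i, u r i * u t i := fun t => (Finset.mul_sum _ _ _).symm
      simp_rw [e3]
      rw [Finset.sum_eq_single r]
      · have : ∑ i, u r i * u r i = 1 := by
          have := hu r; simpa [sq] using this
        rw [this]; ring
      · intro t _ htr; rw [ho r t (Ne.symm htr)]; ring
      · intro h; exact absurd (Finset.mem_univ r) h
    simp_rw [e2]
  have h1 : ∑ i, (s i - ∑ r, a r * u r i) ^ 2
      = ∑ i, (s i ^ 2 - 2 * (s i * ∑ r, a r * u r i) + (∑ r, a r * u r i) ^ 2) := by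
    apply Finset.sum_congr rfl; intro i _; ring
  rw [h1, Finset.sum_add_distrib, Finset.sum_sub_distrib, ← Finset.mul_sum, h2, h3, hs] at h0
  linarith

private lemma triple_factor_aux {dA dB dC : ℕ} (c : ℝ) (A : Fin dA → ℝ) (B : Fin dB → ℝ)
    (C : Fin dC → ℝ) :
    ∑ i, ∑ j, ∑ k, c * (A i * B j * C k) = c * ((∑ i, A i) * (∑ j, B j) * (∑ k, C k)) := by
  have h1 : ∀ i j, ∑ k, c * (A i * B j * C k) = (c * (A i * B j)) * ∑ k, C k := by
    intro i j; rw [Finset.mul_sum]; exact Finset.sum_congr rfl fun k _ => by ring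
  simp_rw [h1]
  have h2 : ∀ i, ∑ j, c * (A i * B j) * ∑ k, C k = (c * A i * ∑ k, C k) * ∑ j, B j := by
    intro i; rw [Finset.mul_sum]; exact Finset.sum_congr rfl fun j _ => by ring
  simp_rw [h2]
  rw [← Finset.sum_mul, ← Finset.sum_mul, ← Finset.mul_sum]
  ring

private lemma tri_aux {d1 d2 d3 R : ℕ} (θ : Fin R → ℝ) (u1 : Fin R → Fin d1 → ℝ)
    (u2 : Fin R → Fin d2 → ℝ) (u3 : Fin R → Fin d3 → ℝ)
    (s1 : Fin d1 → ℝ) (s2 : Fin d2 → ℝ) (s3 : Fin d3 → ℝ) :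
    ∑ i, ∑ j, ∑ k, (∑ r, θ r * (u1 r i * u2 r j * u3 r k)) * s1 i * s2 j * s3 k
    = ∑ r, θ r * ((∑ i, u1 r i * s1 i) * (∑ j, u2 r j * s2 j) * (∑ k, u3 r k * s3 k)) := by
  have e : ∀ i j k, (∑ r, θ r * (u1 r i * u2 r j * u3 r k)) * s1 i * s2 j * s3 k
      = ∑ r, θ r * ((u1 r i * s1 i) * (u2 r j * s2 j) * (u3 r k * s3 k)) := by
    intro i j k; rw [Finset.sum_mul, Finset.sum_mul, Finset.sum_mul]
    apply Finset.sum_congr rfl; intro r _; ring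
  simp_rw [e]
  have c1 : ∀ (i : Fin d1) (j : Fin d2),
      ∑ k, ∑ r, θ r * ((u1 r i * s1 i) * (u2 r j * s2 j) * (u3 r k * s3 k))
      = ∑ r, ∑ k, θ r * ((u1 r i * s1 i) * (u2 r j * s2 j) * (u3 r k * s3 k)) :=
    fun _ _ => Finset.sum_comm
  simp_rw [c1]
  have c2 : ∀ (i : Fin d1),
      ∑ j, ∑ r, ∑ k, θ r * ((u1 r i * s1 i) * (u2 r j * s2 j) * (u3 r k * s3 k))
      = ∑ r, ∑ j, ∑ k, θ r * ((u1 r i * s1 i) * (u2 r j * s2 j) * (u3 r k * s3 k)) :=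
    fun _ => Finset.sum_comm
  simp_rw [c2]
  rw [Finset.sum_comm]
  exact Finset.sum_congr rfl fun r _ => triple_factor_aux _ _ _ _

private lemma sq_ones_aux {p q w : ℝ} (h : p * q * w = 1) (hp : p ^ 2 ≤ 1)
    (hq : q ^ 2 ≤ 1) (hw : w ^ 2 ≤ 1) : p ^ 2 = 1 ∧ q ^ 2 = 1 ∧ w ^ 2 = 1 := by
  have hsq : p ^ 2 * (q ^ 2 * w ^ 2) = 1 := by nlinarith [h]
  have h1 : q ^ 2 * w ^ 2 ≤ 1 := by nlinarith [sq_nonneg q, sq_nonneg w]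
  have h2 : p ^ 2 * w ^ 2 ≤ 1 := by nlinarith [sq_nonneg p, sq_nonneg w]
  have h3 : p ^ 2 * q ^ 2 ≤ 1 := by nlinarith [sq_nonneg p, sq_nonneg q]
  refine ⟨?_, ?_, ?_⟩
  · nlinarith [sq_nonneg p, mul_nonneg (sq_nonneg q) (sq_nonneg w)]
  · nlinarith [sq_nonneg q, mul_nonneg (sq_nonneg p) (sq_nonneg w)]
  · nlinarith [sq_nonneg w, mul_nonneg (sq_nonneg p) (sq_nonneg q)]

private lemma sq_eq_one_iff_of_ne_neg_one_aux {x : ℝ} (h : x ^ 2 = 1) : x = 1 ∨ x = -1 :=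
  mul_self_eq_one_iff.mp (by nlinarith)

/-- Identification of the rank-(1,1,1) (HOOI) maximizer of an odeco tensor:
if `T = ∑_r θ_r (u_{1r} ∘ u_{2r} ∘ u_{3r})` with a strict gap `θ₁ > θ_r` for
`r ≥ 2`, and unit vectors `s₁, s₂, s₃` achieve the value `θ₁` in the trilinear
form, then `s_m = ε_m u_{m1}` for signs `ε₁ε₂ε₃ = 1`. -/
theorem stmt_5 {d1 d2 d3 R : ℕ} (hR : 0 < R)
    (θ : Fin R → ℝ) (hθ : ∀ r, 0 < θ r)
    (hgap : ∀ r : Fin R, r ≠ ⟨0, hR⟩ → θ r < θ ⟨0, hR⟩)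
    (u1 : Fin R → Fin d1 → ℝ) (u2 : Fin R → Fin d2 → ℝ) (u3 : Fin R → Fin d3 → ℝ)
    (hu1 : ∀ r, ∑ i, u1 r i ^ 2 = 1)
    (hu2 : ∀ r, ∑ j, u2 r j ^ 2 = 1)
    (hu3 : ∀ r, ∑ k, u3 r k ^ 2 = 1)
    (ho1 : ∀ r s, r ≠ s → ∑ i, u1 r i * u1 s i = 0)
    (ho2 : ∀ r s, r ≠ s → ∑ j, u2 r j * u2 s j = 0)
    (ho3 : ∀ r s, r ≠ s → ∑ k, u3 r k * u3 s k = 0)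
    (T : Fin d1 → Fin d2 → Fin d3 → ℝ)
    (hT : ∀ i j k, T i j k = ∑ r, θ r * (u1 r i * u2 r j * u3 r k))
    (s1 : Fin d1 → ℝ) (s2 : Fin d2 → ℝ) (s3 : Fin d3 → ℝ)
    (hs1 : ∑ i, s1 i ^ 2 = 1) (hs2 : ∑ j, s2 j ^ 2 = 1) (hs3 : ∑ k, s3 k ^ 2 = 1)
    (hmax : ∑ i, ∑ j, ∑ k, T i j k * s1 i * s2 j * s3 k = θ ⟨0, hR⟩) :
    ∃ ε1 ε2 ε3 : ℝ,
      (ε1 = 1 ∨ ε1 = -1) ∧ (ε2 = 1 ∨ ε2 = -1) ∧ (ε3 = 1 ∨ ε3 = -1) ∧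
      ε1 * ε2 * ε3 = 1 ∧
      s1 = (fun i => ε1 * u1 ⟨0, hR⟩ i) ∧
      s2 = (fun j => ε2 * u2 ⟨0, hR⟩ j) ∧
      s3 = (fun k => ε3 * u3 ⟨0, hR⟩ k) := by
  set z : Fin R := ⟨0, hR⟩ with hz
  set a : Fin R → ℝ := fun r => ∑ i, u1 r i * s1 i with haf
  set b : Fin R → ℝ := fun r => ∑ j, u2 r j * s2 j with hbf
  set c : Fin R → ℝ := fun r => ∑ k, u3 r k * s3 k with hcf
  -- the trilinear value
  have hval : ∑ r, θ r * (a r * b r * c r) = θ z := by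
    rw [← hmax]
    simp_rw [hT]
    exact (tri_aux θ u1 u2 u3 s1 s2 s3).symm
  -- Bessel bounds
  have hBa : ∑ r, a r ^ 2 ≤ 1 := bessel_aux u1 s1 hu1 ho1 hs1
  have hBb : ∑ r, b r ^ 2 ≤ 1 := bessel_aux u2 s2 hu2 ho2 hs2
  have hBc : ∑ r, c r ^ 2 ≤ 1 := bessel_aux u3 s3 hu3 ho3 hs3
  have hia : ∀ r, a r ^ 2 ≤ 1 := fun r =>
    le_trans (Finset.single_le_sum (fun t _ => sq_nonneg (a t)) (Finset.mem_univ r)) hBa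
  have hib : ∀ r, b r ^ 2 ≤ 1 := fun r =>
    le_trans (Finset.single_le_sum (fun t _ => sq_nonneg (b t)) (Finset.mem_univ r)) hBb
  have hic : ∀ r, c r ^ 2 ≤ 1 := fun r =>
    le_trans (Finset.single_le_sum (fun t _ => sq_nonneg (c t)) (Finset.mem_univ r)) hBc
  -- Cauchy-Schwarz: ∑ |a||b| ≤ 1
  have hP : ∑ r, |a r| * |b r| ≤ 1 := by
    have hcs := Finset.sum_mul_sq_le_sq_mul_sq Finset.univ (fun r => |a r|) (fun r => |b r|)
    simp only [sq_abs] at hcs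
    have hnn : (0:ℝ) ≤ ∑ r, |a r| * |b r| :=
      Finset.sum_nonneg fun r _ => mul_nonneg (abs_nonneg _) (abs_nonneg _)
    nlinarith [Finset.sum_nonneg (fun r (_ : r ∈ Finset.univ) => sq_nonneg (a r)),
      Finset.sum_nonneg (fun r (_ : r ∈ Finset.univ) => sq_nonneg (b r))]
  have hQ : ∑ r, |a r * b r * c r| ≤ 1 := by
    refine le_trans (Finset.sum_le_sum fun r _ => ?_) hP
    have hc1 : |c r| ≤ 1 := by
      have := hic r; have := abs_nonneg (c r); nlinarith [sq_abs (c r)]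
    rw [abs_mul, abs_mul]
    have : |a r| * |b r| * |c r| ≤ |a r| * |b r| * 1 := by
      apply mul_le_mul_of_nonneg_left hc1 (mul_nonneg (abs_nonneg _) (abs_nonneg _))
    linarith
  -- equality analysis
  have hkey : ∀ r, 0 ≤ θ z * |a r * b r * c r| - θ r * (a r * b r * c r) := by
    intro r
    have h1 : θ r * (a r * b r * c r) ≤ θ r * |a r * b r * c r| :=
      mul_le_mul_of_nonneg_left (le_abs_self _) (hθ r).le
    have h2 : θ r ≤ θ z := by
      by_cases h : r = z
      · rw [h]
      · exact (hgap r h).le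
    nlinarith [abs_nonneg (a r * b r * c r)]
  have hsumf : ∑ r, (θ z * |a r * b r * c r| - θ r * (a r * b r * c r))
      = θ z * (∑ r, |a r * b r * c r|) - θ z := by
    rw [Finset.sum_sub_distrib, ← Finset.mul_sum, hval]
  have hsum_le : ∑ r, (θ z * |a r * b r * c r| - θ r * (a r * b r * c r)) ≤ 0 := by
    rw [hsumf]; nlinarith [hθ z]
  have hsum0 : ∑ r, (θ z * |a r * b r * c r| - θ r * (a r * b r * c r)) = 0 :=
    le_antisymm hsum_le (Finset.sum_nonneg fun r _ => hkey r)
  have hterm : ∀ r, θ z * |a r * b r * c r| - θ r * (a r * b r * c r) = 0 := by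
    intro r
    exact (Finset.sum_eq_zero_iff_of_nonneg (fun r _ => hkey r)).mp hsum0 r (Finset.mem_univ r)
  have hQ1 : ∑ r, |a r * b r * c r| = 1 := by
    have := hsum0; rw [hsumf] at this
    have h2 : θ z * (∑ r, |a r * b r * c r|) = θ z * 1 := by rw [mul_one]; linarith
    exact mul_left_cancel₀ (ne_of_gt (hθ z)) h2
  have hoff : ∀ r, r ≠ z → a r * b r * c r = 0 := by
    intro r hr
    have h1 := hterm r
    have h2 := hgap r hr
    have h3 := hθ r
    have h4 : a r * b r * c r ≤ |a r * b r * c r| := le_abs_self _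
    have h5 : (0:ℝ) ≤ |a r * b r * c r| := abs_nonneg _
    have habs0 : |a r * b r * c r| = 0 := by nlinarith
    exact abs_eq_zero.mp habs0
  have hdiag : a z * b z * c z = 1 := by
    have hsz : ∑ r, |a r * b r * c r| = |a z * b z * c z| :=
      Finset.sum_eq_single_of_mem z (Finset.mem_univ z)
        (fun r _ hr => by rw [hoff r hr, abs_zero])
    have habs1 : |a z * b z * c z| = 1 := by rw [← hsz, hQ1]
    have h1 := hterm z
    have hzpos := hθ z
    nlinarith [habs1]
  -- each square equals 1
  have ha2 : a z ^ 2 = 1 := (sq_ones_aux hdiag (hia z) (hib z) (hic z)).1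
  have hb2 : b z ^ 2 = 1 := (sq_ones_aux hdiag (hia z) (hib z) (hic z)).2.1
  have hc2 : c z ^ 2 = 1 := (sq_ones_aux hdiag (hia z) (hib z) (hic z)).2.2
  refine ⟨a z, b z, c z, ?_, ?_, ?_, hdiag, ?_, ?_, ?_⟩
  · exact sq_eq_one_iff_of_ne_neg_one_aux ha2
  · exact sq_eq_one_iff_of_ne_neg_one_aux hb2
  · exact sq_eq_one_iff_of_ne_neg_one_aux hc2
  · exact recon_aux (u1 z) s1 (hu1 z) hs1 (a z) rfl ha2
  · exact recon_aux (u2 z) s2 (hu2 z) hs2 (b z) rfl hb2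
  · exact recon_aux (u3 z) s3 (hu3 z) hs3 (c z) rfl hc2
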